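/- arXiv:2310.07320 — 2 statements merged into one kernel-verified Lean document; each statement's English description precedes it below -/
import Mathlib

section
/- Let S be a finite multiset of real numbers with |S| = n > 2f for an integer f ≥ 0, and suppose S contains at most f 'Byzantine' values; all other values are 'normal'. Let B be the multiset obtained by removing the f largest and f smallest elements of S. Then every element b ∈ B satisfies min(normal values) ≤ b ≤ max(normal values), and in particular the average of B lies between the minimum and the maximum of the normal values. -/
/-!
A value kept after trimming sits at a position with at least `f + 1` entries of `S` at or below
it and at least `f + 1` at or above it; as at most `f` entries are Byzantine, each of these two
groups contains a normal value. The mean of the kept values is at least one of them and at most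
another, so it inherits the bracket.
-/

theorem Multiset.exists_mem_of_lt_card_filter_add {α : Type*} {s t : Multiset α} {f : ℕ}
    (ht : card t ≤ f) {p : α → Prop} [DecidablePred p] (h : f < card ((s + t).filter p)) :
    ∃ x ∈ s, p x := by
  have hpos : 0 < card (s.filter p) := by
    have := card_le_card (filter_le p t)
    rw [filter_add, card_add] at h
    omega
  obtain ⟨x, hx⟩ := card_pos_iff_exists_mem.mp hpos
  exact ⟨x, (mem_filter.mp hx).1, (mem_filter.mp hx).2⟩

namespace List

section Sorted

variable {α : Type*} [LinearOrder α] {l : List α}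

theorem SortedLE.lt_card_filter_le_getElem (hl : l.SortedLE) {j : ℕ} (hj : j < l.length) :
    j < Multiset.card ((l : Multiset α).filter (· ≤ l[j])) := by
  have hle : ∀ x ∈ l.take (j + 1), x ≤ l[j] := by
    intro x hx
    obtain ⟨i, hi, rfl⟩ := getElem_of_mem hx
    rw [getElem_take]
    exact hl.getElem_le_getElem_of_le (by rw [length_take] at hi; omega)
  have hsub := ((take_sublist (j + 1) l).filter fun x => decide (x ≤ l[j])).length_le
  rw [filter_eq_self.mpr (by simpa using hle), length_take] at hsub
  simp only [Multiset.filter_coe, Multiset.coe_card]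
  omega

theorem SortedLE.length_sub_le_card_filter_getElem_le (hl : l.SortedLE) {j : ℕ}
    (hj : j < l.length) :
    l.length - j ≤ Multiset.card ((l : Multiset α).filter (l[j] ≤ ·)) := by
  have hge : ∀ x ∈ l.drop j, l[j] ≤ x := by
    intro x hx
    obtain ⟨i, hi, rfl⟩ := getElem_of_mem hx
    rw [getElem_drop]
    exact hl.getElem_le_getElem_of_le (by omega)
  have hsub := ((drop_sublist j l).filter fun x => decide (l[j] ≤ x)).length_le
  rw [filter_eq_self.mpr (by simpa using hge), length_drop] at hsub
  simpa only [Multiset.filter_coe, Multiset.coe_card] using hsub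

theorem SortedLE.lt_card_filter_of_mem_drop_take {f : ℕ} (hl : l.SortedLE) {b : α}
    (hb : b ∈ (l.drop f).take (l.length - 2 * f)) :
    f < Multiset.card ((l : Multiset α).filter (· ≤ b)) ∧
      f < Multiset.card ((l : Multiset α).filter (b ≤ ·)) := by
  obtain ⟨i, hi, rfl⟩ := getElem_of_mem hb
  simp only [length_take, length_drop] at hi
  simp only [getElem_take, getElem_drop]
  have hj : f + i < l.length := by omega
  exact ⟨(Nat.le_add_right f i).trans_lt (hl.lt_card_filter_le_getElem hj),
    (by omega : f < l.length - (f + i)).trans_le (hl.length_sub_le_card_filter_getElem_le hj)⟩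

end Sorted

section Mean

variable {K : Type*} [Field K] [LinearOrder K] [IsStrictOrderedRing K] {l : List K}

theorem exists_le_sum_div_length (hl : l ≠ []) : ∃ x ∈ l, x ≤ l.sum / l.length := by
  have hlen : (l.length : K) ≠ 0 := by simpa using hl
  refine exists_le_of_sum_le hl id (fun _ => l.sum / l.length) ?_
  simp [map_const', mul_div_cancel₀ _ hlen]

theorem exists_sum_div_length_le (hl : l ≠ []) : ∃ x ∈ l, l.sum / l.length ≤ x := by
  have hlen : (l.length : K) ≠ 0 := by simpa using hl
  refine exists_le_of_sum_le hl (fun _ => l.sum / l.length) id ?_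
  simp [map_const', mul_div_cancel₀ _ hlen]

end Mean

end List

theorem trimmed_mean_bracketed (S normal byz : Multiset ℝ) (n f : ℕ)
    (hpart : S = normal + byz)
    (hbyz : Multiset.card byz ≤ f)
    (hcard : Multiset.card S = n)
    (hn : 2 * f < n)
    (B : List ℝ)
    (hB : B = ((S.sort (· ≤ ·)).drop f).take (n - 2 * f)) :
    (∀ b ∈ B, (∃ x ∈ normal, x ≤ b) ∧ (∃ y ∈ normal, b ≤ y)) ∧
    ((∃ x ∈ normal, x ≤ B.sum / B.length) ∧ (∃ y ∈ normal, B.sum / B.length ≤ y)) := by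
  have hsorted : (S.sort (· ≤ ·)).SortedLE := (Multiset.pairwise_sort S _).sortedLE
  have hlen : (S.sort (· ≤ ·)).length = n := by simp [hcard]
  have bracket : ∀ b ∈ B, (∃ x ∈ normal, x ≤ b) ∧ (∃ y ∈ normal, b ≤ y) := by
    intro b hb
    rw [hB, ← hlen] at hb
    obtain ⟨hbelow, habove⟩ := hsorted.lt_card_filter_of_mem_drop_take hb
    rw [Multiset.sort_eq, hpart] at hbelow habove
    exact ⟨Multiset.exists_mem_of_lt_card_filter_add hbyz hbelow,
      Multiset.exists_mem_of_lt_card_filter_add hbyz habove⟩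
  have hne : B ≠ [] := by
    rw [← List.length_pos_iff, hB]
    simp only [List.length_take, List.length_drop, hlen]
    omega
  obtain ⟨b, hb, hb_le⟩ := B.exists_le_sum_div_length hne
  obtain ⟨b', hb', hle_b'⟩ := B.exists_sum_div_length_le hne
  obtain ⟨x, hx, hxb⟩ := (bracket b hb).1
  obtain ⟨y, hy, hb'y⟩ := (bracket b' hb').2
  exact ⟨bracket, ⟨x, hx, hxb.trans hb_le⟩, ⟨y, hy, hle_b'.trans hb'y⟩⟩
end

section
/- Let f ≥ 0 be an integer and let A be a finite index set with |A| > 2f, partitioned into honest indices H_A and at most f Byzantine indices. For each j ∈ A let x_j ∈ ℝ, and let B ⊆ A be obtained by deleting the indices of the f largest and f smallest values x_j (ties broken arbitrarily). Then for every Byzantine index j ∈ B there exist distinct honest indices j⁻, j⁺ ∈ A \ B with x_{j⁻} ≤ x_j ≤ x_{j⁺}, and hence x_j is a convex combination of x_{j⁻} and x_{j⁺}. Consequently, the average z = (x_i + ∑_{j∈B} x_j)/(|B|+1) (for a fixed honest index i ∉ A) can be written as a convex combination z = w_i x_i + ∑_{j∈H_A} w_j x_j with w_i ≥ 1/(|B|+1)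 and at least |B| of the honest weights w_j bounded below by 1/(2(|B|+1)). -/
/-!
If `m` Byzantine indices survive in `B`, each of `Top` and `Bot` (of size `f`, disjoint from `B`)
contains at least `m` honest indices, since only `f` indices are Byzantine altogether. Every
surviving value lies between the trimmed ones, so the sums over `m` honest indices `Lo ⊆ Bot` and
`Hi ⊆ Top` bracket the Byzantine sum, which thus equals `β ∑ Lo + (1 - β) ∑ Hi`. Spreading the
Byzantine mass this way, the larger of `β`, `1 - β` is at least `1 / 2`, and the honest part of
`B` together with `Lo` or `Hi` supplies the `|B|` honest indices of weight `≥ 1 / (2 (|B| + 1))`.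
-/

open Finset

theorem Finset.sum_le_sum_of_card_eq_of_forall_le {ι M : Type*} [AddCommMonoid M] [LinearOrder M]
    [IsOrderedCancelAddMonoid M] {s t : Finset ι} {f : ι → M} (hst : #s = #t)
    (h : ∀ a ∈ s, ∀ b ∈ t, f a ≤ f b) : ∑ a ∈ s, f a ≤ ∑ b ∈ t, f b := by
  rcases s.eq_empty_or_nonempty with rfl | hs
  · rw [eq_comm, card_empty, card_eq_zero] at hst
    simp [hst]
  refine (nsmul_le_nsmul_iff_right hs.card_pos.ne').mp ?_
  calc #s • ∑ a ∈ s, f a = ∑ _b ∈ t, ∑ a ∈ s, f a := by rw [sum_const, hst]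
    _ ≤ ∑ b ∈ t, ∑ _a ∈ s, f b := sum_le_sum fun b hb => sum_le_sum fun a ha => h a ha b hb
    _ = #s • ∑ b ∈ t, f b := by rw [sum_comm, sum_const]

theorem exists_eq_convex_combination_of_mem_Icc {𝕜 : Type*} [Field 𝕜] [LinearOrder 𝕜]
    [IsStrictOrderedRing 𝕜] {a b c : 𝕜} (hac : a ≤ c) (hcb : c ≤ b) :
    ∃ β : 𝕜, 0 ≤ β ∧ β ≤ 1 ∧ c = β * a + (1 - β) * b := by
  obtain ⟨β, γ, hβ, hγ, hβγ, rfl⟩ := Icc_subset_segment (𝕜 := 𝕜) ⟨hac, hcb⟩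
  refine ⟨β, hβ, by linarith, ?_⟩
  rw [← hβγ, smul_eq_mul, smul_eq_mul, add_sub_cancel_left]

theorem Finset.card_sdiff_le_card_inter_of_disjoint {ι : Type*} [DecidableEq ι]
    {A H T C : Finset ι} (hT : T ⊆ A) (hC : C ⊆ A) (hTC : Disjoint T C)
    (hA : #(A \ H) ≤ #T) : #(C \ H) ≤ #(T ∩ H) := by
  have hcover : #(T \ H) + #(C \ H) ≤ #(A \ H) := by
    rw [← card_union_of_disjoint (hTC.mono sdiff_subset sdiff_subset)]
    exact card_le_card (union_subset (sdiff_subset_sdiff hT le_rfl) (sdiff_subset_sdiff hC le_rfl))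
  have := card_inter_add_card_sdiff T H
  omega

section ReparamWeights

variable {ι : Type*} [DecidableEq ι]

/-- `P` holds the honest retained indices, `Lo` and `Hi` the honest trimmed ones that absorb the
Byzantine mass in proportions `β` and `1 - β`. -/
def reparamCoeff (P Lo Hi : Finset ι) (β : ℝ) (j : ι) : ℝ :=
  (if j ∈ P then 1 else 0) + (if j ∈ Lo then β else 0) + (if j ∈ Hi then 1 - β else 0)

theorem reparamCoeff_nonneg {P Lo Hi : Finset ι} {β : ℝ} (hβ0 : 0 ≤ β) (hβ1 : β ≤ 1) (j : ι) :
    0 ≤ reparamCoeff P Lo Hi β j := by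
  unfold reparamCoeff; split_ifs <;> linarith

theorem exists_half_le_reparamCoeff (P Lo Hi : Finset ι) {β : ℝ} (hβ0 : 0 ≤ β) (hβ1 : β ≤ 1) :
    ∃ Q, (Q = Lo ∨ Q = Hi) ∧ ∀ j ∈ P ∪ Q, 1 / 2 ≤ reparamCoeff P Lo Hi β j := by
  by_cases hβ : 1 / 2 ≤ β
  · refine ⟨Lo, .inl rfl, fun j hj => ?_⟩
    rw [mem_union] at hj
    unfold reparamCoeff; split_ifs <;> simp_all <;> linarith
  · refine ⟨Hi, .inr rfl, fun j hj => ?_⟩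
    rw [mem_union] at hj
    unfold reparamCoeff; split_ifs <;> simp_all <;> linarith

theorem sum_reparamCoeff_mul {H P Lo Hi : Finset ι} (hP : P ⊆ H) (hLo : Lo ⊆ H) (hHi : Hi ⊆ H)
    (β : ℝ) (g : ι → ℝ) :
    ∑ j ∈ H, reparamCoeff P Lo Hi β j * g j
      = ∑ j ∈ P, g j + (β * ∑ j ∈ Lo, g j + (1 - β) * ∑ j ∈ Hi, g j) := by
  simp only [reparamCoeff, add_mul, ite_mul, zero_mul, sum_add_distrib, sum_ite_mem,
    inter_eq_right.mpr hP, inter_eq_right.mpr hLo, inter_eq_right.mpr hHi, one_mul, mul_sum,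
    add_assoc]

theorem exists_convex_weights {H P Lo Hi : Finset ι} {i : ι} {n : ℕ} {β : ℝ} (x : ι → ℝ)
    (hi : i ∉ H) (hP : P ⊆ H) (hLo : Lo ⊆ H) (hHi : Hi ⊆ H)
    (hPLo : Disjoint P Lo) (hPHi : Disjoint P Hi) (hcard : #Lo = #Hi) (hn : #P + #Lo = n)
    (hβ0 : 0 ≤ β) (hβ1 : β ≤ 1) :
    ∃ w : ι → ℝ, (∀ j, 0 ≤ w j) ∧
      w i + ∑ j ∈ H, w j = 1 ∧
      (x i + (∑ j ∈ P, x j + (β * ∑ j ∈ Lo, x j + (1 - β) * ∑ j ∈ Hi, x j))) / ((n : ℝ) + 1)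
        = w i * x i + ∑ j ∈ H, w j * x j ∧
      1 / ((n : ℝ) + 1) ≤ w i ∧
      ∃ S ⊆ H, n ≤ #S ∧ ∀ j ∈ S, 1 / (2 * ((n : ℝ) + 1)) ≤ w j := by
  set c := reparamCoeff P Lo Hi β
  set N : ℝ := n + 1 with hNn
  have hN : 0 < N := by positivity
  set w : ι → ℝ := fun j => (if j = i then 1 else c j) / N
  have hwi : w i = 1 / N := by simp [w]
  have hwH : ∀ j ∈ H, w j = c j / N := fun j hj => by simp [w, ne_of_mem_of_not_mem hj hi]
  have hsum : ∀ g : ι → ℝ, ∑ j ∈ H, w j * g j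
      = (∑ j ∈ P, g j + (β * ∑ j ∈ Lo, g j + (1 - β) * ∑ j ∈ Hi, g j)) / N := fun g => by
    rw [← sum_reparamCoeff_mul hP hLo hHi, sum_div]
    exact sum_congr rfl fun j hj => by rw [hwH j hj, div_mul_eq_mul_div]
  obtain ⟨Q, hQ, hQc⟩ := exists_half_le_reparamCoeff P Lo Hi hβ0 hβ1
  have hPQ : P ∪ Q ⊆ H := union_subset hP (by rcases hQ with rfl | rfl <;> assumption)
  refine ⟨w, fun j => ?_, ?_, ?_, hwi.ge, P ∪ Q, hPQ, ?_, fun j hj => ?_⟩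
  · by_cases hj : j = i
    · simp [w, hj, hN.le]
    · simpa [w, hj] using div_nonneg (reparamCoeff_nonneg hβ0 hβ1 j) hN.le
  · have htotal := hsum 1
    simp only [Pi.one_apply, mul_one, sum_const, nsmul_one, hcard] at htotal
    rw [hwi, htotal, ← add_div, div_eq_one_iff_eq hN.ne', hNn, ← hn, hcard]
    push_cast; ring
  · rw [hwi, hsum x]; ring
  · rcases hQ with rfl | rfl
    · rw [card_union_of_disjoint hPLo, hn]
    · rw [card_union_of_disjoint hPHi, ← hcard, hn]
  · rw [hwH j (hPQ hj), div_le_div_iff₀ (by positivity) hN]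
    nlinarith [hQc j hj]

end ReparamWeights

theorem trimmed_mean_reparameterization_general {ι : Type*} [DecidableEq ι]
    (f : ℕ) (A HA B Top Bot : Finset ι) (x : ι → ℝ) (i : ι)
    (hHA : HA ⊆ A) (hbyzcard : (A \ HA).card ≤ f)
    (hBsub : B ⊆ A)
    (hTop : Top ⊆ A \ B) (hBot : Bot ⊆ A \ B)
    (hdisj : Disjoint Top Bot)
    (hTopcard : Top.card = f) (hBotcard : Bot.card = f)
    (hTople : ∀ j ∈ B, ∀ u ∈ Top, x j ≤ x u)
    (hBotle : ∀ j ∈ B, ∀ l ∈ Bot, x l ≤ x j)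
    (hi : i ∉ A) :
    (∀ j ∈ B \ HA, ∃ jm ∈ (A \ B) ∩ HA, ∃ jp ∈ (A \ B) ∩ HA,
        jm ≠ jp ∧ x jm ≤ x j ∧ x j ≤ x jp ∧
        ∃ β : ℝ, 0 ≤ β ∧ β ≤ 1 ∧ x j = β * x jm + (1 - β) * x jp) ∧
    ∃ w : ι → ℝ, (∀ j, 0 ≤ w j) ∧
      w i + ∑ j ∈ HA, w j = 1 ∧
      (x i + ∑ j ∈ B, x j) / ((B.card : ℝ) + 1)
        = w i * x i + ∑ j ∈ HA, w j * x j ∧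
      1 / ((B.card : ℝ) + 1) ≤ w i ∧
      ∃ S ⊆ HA, B.card ≤ S.card ∧ ∀ j ∈ S, 1 / (2 * ((B.card : ℝ) + 1)) ≤ w j := by
  have hTopB : Disjoint Top B := disjoint_left.2 fun _ h => (mem_sdiff.1 (hTop h)).2
  have hBotB : Disjoint Bot B := disjoint_left.2 fun _ h => (mem_sdiff.1 (hBot h)).2
  obtain ⟨Hi, hHi, hHicard⟩ := exists_subset_card_eq <|
    card_sdiff_le_card_inter_of_disjoint (hTop.trans sdiff_subset) hBsub hTopB (hTopcard ▸ hbyzcard)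
  obtain ⟨Lo, hLo, hLocard⟩ := exists_subset_card_eq <|
    card_sdiff_le_card_inter_of_disjoint (hBot.trans sdiff_subset) hBsub hBotB (hBotcard ▸ hbyzcard)
  have hHiTop : Hi ⊆ Top := hHi.trans inter_subset_left
  have hLoBot : Lo ⊆ Bot := hLo.trans inter_subset_left
  refine ⟨fun j hj => ?_, ?_⟩
  · obtain ⟨jp, hjp⟩ : Hi.Nonempty := card_pos.1 (hHicard ▸ card_pos.2 ⟨j, hj⟩)
    obtain ⟨jm, hjm⟩ : Lo.Nonempty := card_pos.1 (hLocard ▸ card_pos.2 ⟨j, hj⟩)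
    have hjm_le := hBotle j (mem_sdiff.1 hj).1 jm (hLoBot hjm)
    have hle_jp := hTople j (mem_sdiff.1 hj).1 jp (hHiTop hjp)
    refine ⟨jm, mem_inter.2 ⟨hBot (hLoBot hjm), (mem_inter.1 (hLo hjm)).2⟩,
      jp, mem_inter.2 ⟨hTop (hHiTop hjp), (mem_inter.1 (hHi hjp)).2⟩,
      fun h => disjoint_left.1 hdisj (hHiTop hjp) (h ▸ hLoBot hjm), hjm_le, hle_jp,
      exists_eq_convex_combination_of_mem_Icc hjm_le hle_jp⟩
  · obtain ⟨β, hβ0, hβ1, hβ⟩ := exists_eq_convex_combination_of_mem_Icc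
      (sum_le_sum_of_card_eq_of_forall_le hLocard
        fun l hl j hj => hBotle j (mem_sdiff.1 hj).1 l (hLoBot hl))
      (sum_le_sum_of_card_eq_of_forall_le hHicard.symm
        fun j hj u hu => hTople j (mem_sdiff.1 hj).1 u (hHiTop hu))
    rw [← sum_inter_add_sum_sdiff B HA x, hβ]
    exact exists_convex_weights x (fun h => hi (hHA h)) inter_subset_right
      (hLo.trans inter_subset_right) (hHi.trans inter_subset_right)
      (hBotB.symm.mono inter_subset_left hLoBot) (hTopB.symm.mono inter_subset_left hHiTop)
      (hLocard.trans hHicard.symm) (hLocard ▸ card_inter_add_card_sdiff B HA) hβ0 hβ1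

theorem trimmed_mean_reparameterization {ι : Type*} [DecidableEq ι]
    (f : ℕ) (A HA B Top Bot : Finset ι) (x : ι → ℝ) (i : ι)
    (hHA : HA ⊆ A) (hbyzcard : (A \ HA).card ≤ f)
    (hAcard : 2 * f < A.card)
    (hBsub : B ⊆ A)
    (hTop : Top ⊆ A \ B) (hBot : Bot ⊆ A \ B)
    (hdisj : Disjoint Top Bot)
    (hTopcard : Top.card = f) (hBotcard : Bot.card = f)
    (hunion : A = B ∪ Top ∪ Bot)
    (hTople : ∀ j ∈ B, ∀ u ∈ Top, x j ≤ x u)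
    (hBotle : ∀ j ∈ B, ∀ l ∈ Bot, x l ≤ x j)
    (hi : i ∉ A) :
    (∀ j ∈ B \ HA, ∃ jm ∈ (A \ B) ∩ HA, ∃ jp ∈ (A \ B) ∩ HA,
        jm ≠ jp ∧ x jm ≤ x j ∧ x j ≤ x jp ∧
        ∃ β : ℝ, 0 ≤ β ∧ β ≤ 1 ∧ x j = β * x jm + (1 - β) * x jp) ∧
    ∃ w : ι → ℝ, (∀ j, 0 ≤ w j) ∧
      w i + ∑ j ∈ HA, w j = 1 ∧
      (x i + ∑ j ∈ B, x j) / ((B.card : ℝ) + 1)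
        = w i * x i + ∑ j ∈ HA, w j * x j ∧
      1 / ((B.card : ℝ) + 1) ≤ w i ∧
      ∃ S ⊆ HA, B.card ≤ S.card ∧ ∀ j ∈ S, 1 / (2 * ((B.card : ℝ) + 1)) ≤ w j :=
  trimmed_mean_reparameterization_general f A HA B Top Bot x i hHA hbyzcard hBsub hTop hBot hdisj
    hTopcard hBotcard hTople hBotle hi
end
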